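/- Let G be a group and M_i, M_j, h_i, h_j ∈ G with: M_i, M_j elements of a subset on which some power map p ↦ x^p is injective for each nonzero p (e.g., elements of a torsion-free abelian normal family of 'multitwists'); h_i, h_j of finite order k; h_i commutes with M_i and M_j, h_j commutes with M_i and M_j; and (M_i h_i)^{(M_i h_i)(M_j h_j)-conjugation} = M_j h_j, i.e., (M_i h_i M_j h_j)(M_i h_i)(M_i h_i M_j h_j)^{-1} = M_j h_j. If furthermore conjugation by (M_i h_i)(M_j h_j) sends M_i to an element M with M^k = M_j^k and M is a multitwist (so M = M_j), then h_i^{(M_i h_i)(M_j h_j)} = h_j, and consequently h_i h_j h_i = h_j h_i h_j and M_i M_j M_i = M_j M_i M_j. -/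
import Mathlib


/-- Abstract form of Claim 5.6: let `T` be a conjugation-invariant set of
"multitwists" on which the `k`-th power map is injective, let
`x_i = M_i h_i`, `x_j = M_j h_j` with `M_i, M_j ∈ T`, `h_i^k = h_j^k = 1`, and
all `h`'s commuting with all `M`'s. If `(x_i x_j) x_i (x_i x_j)⁻¹ = x_j`, then
the conjugate of `h_i` by `x_i x_j` is `h_j`, and both the `h`-parts and the
`M`-parts satisfy the braid relation. -/
theorem stmt19 (G : Type*) [Group G] (T : Set G)
    (hTconj : ∀ g : G, ∀ x ∈ T, g * x * g⁻¹ ∈ T)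
    (hTpow : ∀ (k' : ℕ), 0 < k' → ∀ x ∈ T, ∀ y ∈ T, x ^ k' = y ^ k' → x = y)
    (Mi Mj hi hj : G) (k : ℕ) (hk : 0 < k)
    (hMiT : Mi ∈ T) (hMjT : Mj ∈ T)
    (hhik : hi ^ k = 1) (hhjk : hj ^ k = 1)
    (hc1 : Commute hi Mi) (hc2 : Commute hi Mj)
    (hc3 : Commute hj Mi) (hc4 : Commute hj Mj)
    (hrel : (Mi * hi * (Mj * hj)) * (Mi * hi) * (Mi * hi * (Mj * hj))⁻¹
      = Mj * hj) :
    (Mi * hi * (Mj * hj)) * hi * (Mi * hi * (Mj * hj))⁻¹ = hj ∧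
    hi * hj * hi = hj * hi * hj ∧
    Mi * Mj * Mi = Mj * Mi * Mj := by
  set x := Mi * hi * (Mj * hj) with hx
  have hconjpow : ∀ a : G, (x * a * x⁻¹) ^ k = x * a ^ k * x⁻¹ := fun a => by
    rw [← MulAut.conj_apply, ← map_pow, MulAut.conj_apply]
  have hMik : (Mi * hi) ^ k = Mi ^ k := by
    rw [hc1.symm.mul_pow, hhik, mul_one]
  have hMjk : (Mj * hj) ^ k = Mj ^ k := by
    rw [hc4.symm.mul_pow, hhjk, mul_one]
  have hM : x * Mi * x⁻¹ = Mj := by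
    apply hTpow k hk _ (hTconj x Mi hMiT) Mj hMjT
    rw [hconjpow Mi, ← hMik, ← hconjpow (Mi * hi), hrel, hMjk]
  have hh : x * hi * x⁻¹ = hj := by
    have e : (x * Mi * x⁻¹) * (x * hi * x⁻¹) = x * (Mi * hi) * x⁻¹ := by group
    have := hrel
    rw [← e, hM] at this
    exact mul_left_cancel this
  have swap : ∀ h m z : G, h * m = m * h → h * (m * z) = m * (h * z) := by
    intro h m z hcomm
    rw [← mul_assoc, hcomm, mul_assoc]
  have s1 : ∀ z : G, hi * (Mi * z) = Mi * (hi * z) := fun z => swap _ _ _ hc1.eq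
  have s2 : ∀ z : G, hi * (Mj * z) = Mj * (hi * z) := fun z => swap _ _ _ hc2.eq
  have s3 : ∀ z : G, hj * (Mi * z) = Mi * (hj * z) := fun z => swap _ _ _ hc3.eq
  have s4 : ∀ z : G, hj * (Mj * z) = Mj * (hj * z) := fun z => swap _ _ _ hc4.eq
  refine ⟨hh, ?_, ?_⟩
  · have e : x * hi = hj * x := by
      rw [← hh]; group
    rw [hx] at e
    simp only [mul_assoc, s1, s2, s3, s4, hc1.eq, hc2.eq, hc3.eq, hc4.eq] at e
    have := mul_left_cancel (mul_left_cancel e)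
    simp only [← mul_assoc] at this
    exact this
  · have e : x * Mi = Mj * x := by
      rw [← hM]; group
    rw [hx] at e
    simp only [mul_assoc, s1, s2, s3, s4, hc1.eq, hc2.eq, hc3.eq, hc4.eq] at e
    -- now e should be Mi * (Mj * (Mi * (...))) = Mj * (Mi * (Mj * (...)))
    simp only [← mul_assoc] at e
    have h2 := mul_right_cancel (mul_right_cancel e)
    exact h2
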